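/- arXiv:1009.2469 — 3 statements merged into one kernel-verified Lean document; each statement's English description precedes it below -/
import Mathlib

section
/- Let Q be a quiver with vertex set I and let i be a source of Q. Let σ_iQ be the quiver obtained by reversing all arrows incident to i. Then the Euler forms satisfy ⟨s_i μ, s_i ν⟩_Q = ⟨μ, ν⟩_{σ_iQ} for all μ, ν ∈ ℤ^I, where s_i is the simple reflection associated to the symmetrized form ⟨μ,ν⟩ = ⟨μ,ν⟩_Q + ⟨ν,μ⟩_Q. -/
/-- The Euler form of the quiver with arrow data `(s, t)`:
`⟨μ,ν⟩_Q = Σ_i μ_i ν_i − Σ_{a∈E} μ_{s(a)} ν_{t(a)}`. -/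
def eulerForm {I E : Type} [Fintype I] [Fintype E] (s t : E → I) (μ ν : I → ℤ) : ℤ :=
  ∑ i, μ i * ν i - ∑ a, μ (s a) * ν (t a)

/-- Let `i` be a source of the quiver `Q = (I, E, s, t)`, and let
`σ_i Q` be the quiver obtained by reversing all arrows incident to `i`. Then the
Euler forms satisfy `⟨s_i μ, s_i ν⟩_Q = ⟨μ, ν⟩_{σ_i Q}` for all `μ, ν ∈ ℤ^I`,
where `s_i μ = μ − ⟨α_i, μ⟩ α_i` is the simple reflection for the symmetrized
form `⟨μ,ν⟩ = ⟨μ,ν⟩_Q + ⟨ν,μ⟩_Q`. -/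
theorem stmt1 {I E : Type} [Fintype I] [Fintype E] [DecidableEq I]
    (s t : E → I) (i : I)
    (hsource : ∀ a, t a ≠ i)
    (σs σt : E → I)
    (hσs : ∀ a, σs a = if s a = i ∨ t a = i then t a else s a)
    (hσt : ∀ a, σt a = if s a = i ∨ t a = i then s a else t a)
    (refl : (I → ℤ) → (I → ℤ))
    (hrefl : ∀ μ, refl μ
      = μ - (eulerForm s t (Pi.single i 1) μ + eulerForm s t μ (Pi.single i 1))
            • (Pi.single i 1 : I → ℤ))
    (μ ν : I → ℤ) :
    eulerForm s t (refl μ) (refl ν) = eulerForm σs σt μ ν := by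
  set A : ℤ := ∑ a, (if s a = i then μ (t a) else 0) with hA
  set B : ℤ := ∑ a, (if s a = i then ν (t a) else 0) with hB
  -- the reflection coefficients
  have hc : ∀ ρ : I → ℤ,
      eulerForm s t (Pi.single i 1) ρ + eulerForm s t ρ (Pi.single i 1)
        = 2 * ρ i - ∑ a, (if s a = i then ρ (t a) else 0) := by
    intro ρ
    have h1 : ∑ j, (Pi.single i 1 : I → ℤ) j * ρ j = ρ i := by
      simp [Pi.single_apply]
    have h2 : ∑ j, ρ j * (Pi.single i 1 : I → ℤ) j = ρ i := by
      simp [Pi.single_apply]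
    have h3 : ∑ a, (Pi.single i 1 : I → ℤ) (s a) * ρ (t a)
        = ∑ a, (if s a = i then ρ (t a) else 0) := by
      simp [Pi.single_apply, ite_mul]
    have h4 : ∑ a, ρ (s a) * (Pi.single i 1 : I → ℤ) (t a) = 0 := by
      simp [Pi.single_apply, hsource]
    simp only [eulerForm, h1, h2, h3, h4]
    ring
  set c : ℤ := eulerForm s t (Pi.single i 1) μ + eulerForm s t μ (Pi.single i 1) with hcdef
  set d : ℤ := eulerForm s t (Pi.single i 1) ν + eulerForm s t ν (Pi.single i 1) with hddef
  have hcv : c = 2 * μ i - A := hc μ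
  have hdv : d = 2 * ν i - B := hc ν
  have hμ : ∀ j, refl μ j = μ j - c * (if j = i then 1 else 0) := by
    intro j
    rw [hrefl]
    simp only [Pi.sub_apply, Pi.smul_apply, smul_eq_mul, Pi.single_apply, hcdef]
  have hν : ∀ j, refl ν j = ν j - d * (if j = i then 1 else 0) := by
    intro j
    rw [hrefl]
    simp only [Pi.sub_apply, Pi.smul_apply, smul_eq_mul, Pi.single_apply, hddef]
  -- vertex sum on the left
  have hvert : ∑ j, refl μ j * refl ν j
      = (∑ j, μ j * ν j) - c * ν i - d * μ i + c * d := by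
    have step : ∀ j ∈ Finset.univ, refl μ j * refl ν j
        = μ j * ν j
          - c * ((if j = i then 1 else 0) * ν j)
          - d * (μ j * (if j = i then 1 else 0))
          + c * d * ((if j = i then (1:ℤ) else 0) * (if j = i then 1 else 0)) := by
      intro j _; rw [hμ, hν]; ring
    rw [Finset.sum_congr rfl step]
    simp only [Finset.sum_add_distrib, Finset.sum_sub_distrib, ← Finset.mul_sum]
    simp [ite_mul, mul_ite]
  -- edge sum on the left
  have hedge : ∑ a, refl μ (s a) * refl ν (t a)
      = (∑ a, μ (s a) * ν (t a)) - c * B := by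
    have step : ∀ a ∈ Finset.univ, refl μ (s a) * refl ν (t a)
        = μ (s a) * ν (t a) - c * (if s a = i then ν (t a) else 0) := by
      intro a _
      rw [hμ, hν]
      rw [if_neg (hsource a)]
      split_ifs <;> ring
    rw [Finset.sum_congr rfl step, Finset.sum_sub_distrib, ← Finset.mul_sum, ← hB]
  -- edge sum on the right
  have hedge' : ∑ a, μ (σs a) * ν (σt a)
      = (∑ a, μ (s a) * ν (t a)) + A * ν i - μ i * B := by
    have step : ∀ a ∈ Finset.univ, μ (σs a) * ν (σt a)
        = μ (s a) * ν (t a)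
          + (if s a = i then μ (t a) else 0) * ν i
          - μ i * (if s a = i then ν (t a) else 0) := by
      intro a _
      rw [hσs, hσt]
      simp only [or_iff_left (hsource a)]
      split_ifs with h
      · rw [h]; ring
      · ring
    rw [Finset.sum_congr rfl step]
    simp only [Finset.sum_add_distrib, Finset.sum_sub_distrib, ← Finset.sum_mul,
      ← Finset.mul_sum, ← hA, ← hB]
  simp only [eulerForm, hvert, hedge, hedge']
  rw [hcv, hdv]
  ring
end

section
/- Let Q be a quiver obtained by orienting a Dynkin diagram of type ADE, let (i_1,…,i_n) be a sequence of vertices adapted to the opposite quiver Q*, and suppose s_{i_1}⋯s_{i_n} is a reduced expression for w ∈ W. Then as linear forms on the root lattice, ⟨−w α_{i_n}, ·⟩_Q = ⟨−w ω_{i_n}, ·⟩, where ⟨·,·⟩_Q is the Euler form of Q and ⟨·,·⟩ is the symmetrized (Weyl-invariant) form, with ω_{i_n} the fundamental weight paired via the symmetrized form. -/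
set_option linter.unusedSectionVars false
set_option linter.unreachableTactic false
set_option linter.unusedTactic false
set_option linter.unusedVariables false

namespace Stmt2

variable {I E : Type} [Fintype I] [Fintype E] [DecidableEq I]

/-- The Euler form `⟨μ,ν⟩_Q` of the quiver with arrow data `st = (src, tgt)`. -/
def euler (st : (E → I) × (E → I)) (μ ν : I → ℚ) : ℚ :=
  ∑ i, μ i * ν i - ∑ a, μ (st.1 a) * ν (st.2 a)

/-- The symmetrized (Weyl-invariant) form `⟨μ,ν⟩ = ⟨μ,ν⟩_Q + ⟨ν,μ⟩_Q`
(independent of the orientation). -/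
def symF (st : (E → I) × (E → I)) (μ ν : I → ℚ) : ℚ :=
  euler st μ ν + euler st ν μ

/-- Reversing all arrows incident to the vertex `i`. -/
def sigmaQ (i : I) (st : (E → I) × (E → I)) : (E → I) × (E → I) :=
  (fun a => if st.1 a = i ∨ st.2 a = i then st.2 a else st.1 a,
   fun a => if st.1 a = i ∨ st.2 a = i then st.1 a else st.2 a)

/-- Iterated orientation change along a list of vertices. -/
def iterQ : List I → (E → I) × (E → I) → (E → I) × (E → I)
  | [], st => st
  | i :: l, st => iterQ l (sigmaQ i st)

/-- The sequence `(i_1, …, i_n)` is adapted to `Q*`: `i_1` is a source of `Q`,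
`i_2` is a source of `σ_{i_1}Q`, `i_3` is a source of `σ_{i_2}σ_{i_1}Q`, etc. -/
def Adapted : List I → (E → I) × (E → I) → Prop
  | [], _ => True
  | i :: l, st => (∀ a, st.2 a ≠ i) ∧ Adapted l (sigmaQ i st)

/-- The simple reflection `s_i` for the symmetrized form. -/
noncomputable def refl (st : (E → I) × (E → I)) (i : I) (μ : I → ℚ) : I → ℚ :=
  μ - symF st (Pi.single i 1) μ • (Pi.single i 1 : I → ℚ)

/-- The Weyl-group element `s_{i_1} ⋯ s_{i_n}` acting on `ℚ^I`. -/
noncomputable def applyL (st : (E → I) × (E → I)) : List I → (I → ℚ) → (I → ℚ)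
  | [], μ => μ
  | i :: l, μ => refl st i (applyL st l μ)

/-- The word `l` is a reduced expression of the Weyl group element it defines. -/
def IsReduced (st : (E → I) × (E → I)) (l : List I) : Prop :=
  ∀ l' : List I, applyL st l' = applyL st l → l.length ≤ l'.length

section Aux

variable (st : (E → I) × (E → I))

lemma euler_sub_left (μ μ' ν : I → ℚ) :
    euler st (μ - μ') ν = euler st μ ν - euler st μ' ν := by
  simp [euler, sub_mul, Finset.sum_sub_distrib]; ring

lemma euler_sub_right (μ ν ν' : I → ℚ) :
    euler st μ (ν - ν') = euler st μ ν - euler st μ ν' := by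
  simp [euler, mul_sub, Finset.sum_sub_distrib]; ring

lemma euler_smul_left (c : ℚ) (μ ν : I → ℚ) :
    euler st (c • μ) ν = c * euler st μ ν := by
  simp [euler, Finset.mul_sum, mul_sub, mul_assoc]

lemma euler_smul_right (c : ℚ) (μ ν : I → ℚ) :
    euler st μ (c • ν) = c * euler st μ ν := by
  simp [euler, Finset.mul_sum, mul_sub]; ring_nf
  rw [sub_eq_neg_add, Finset.sum_congr rfl (fun x _ => (by ring : μ x * c * ν x = c * μ x * ν x))]

lemma symF_comm (μ ν : I → ℚ) : symF st μ ν = symF st ν μ := add_comm _ _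

lemma symF_sub_left (μ μ' ν : I → ℚ) :
    symF st (μ - μ') ν = symF st μ ν - symF st μ' ν := by
  simp [symF, euler_sub_left, euler_sub_right]; ring

lemma symF_sub_right (μ ν ν' : I → ℚ) :
    symF st μ (ν - ν') = symF st μ ν - symF st μ ν' := by
  simp [symF, euler_sub_left, euler_sub_right]; ring

lemma symF_smul_left (c : ℚ) (μ ν : I → ℚ) :
    symF st (c • μ) ν = c * symF st μ ν := by
  simp [symF, euler_smul_left, euler_smul_right]; ring

lemma symF_smul_right (c : ℚ) (μ ν : I → ℚ) :
    symF st μ (c • ν) = c * symF st μ ν := by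
  simp [symF, euler_smul_left, euler_smul_right]; ring

lemma symF_zero_left (ν : I → ℚ) : symF st (0 : I → ℚ) ν = 0 := by
  simp [symF, euler]

lemma symF_neg_left (μ ν : I → ℚ) : symF st (-μ) ν = -symF st μ ν := by
  have h : (-μ : I → ℚ) = (0 : I → ℚ) - μ := by ext j; simp
  rw [h, symF_sub_left, symF_zero_left]; ring

lemma symF_neg_right (μ ν : I → ℚ) : symF st μ (-ν) = -symF st μ ν := by
  rw [symF_comm, symF_neg_left, symF_comm]

lemma symF_single_single (hnoloop : ∀ a, st.1 a ≠ st.2 a) (i : I) :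
    symF st (Pi.single i 1) (Pi.single i 1) = 2 := by
  have h1 : ∑ j, (Pi.single i 1 : I → ℚ) j * (Pi.single i 1 : I → ℚ) j = 1 := by
    simp [Pi.single_apply]
  have h2 : ∀ a : E, (Pi.single i 1 : I → ℚ) (st.1 a) * (Pi.single i 1 : I → ℚ) (st.2 a) = 0 := by
    intro a
    rcases eq_or_ne (st.1 a) i with h | h
    · simp [Pi.single_apply, (h ▸ hnoloop a).symm]
    · simp [Pi.single_apply, h]
  simp [symF, euler, h1, h2]
  norm_num

lemma symF_sigma (i : I) (μ ν : I → ℚ) : symF (sigmaQ i st) μ ν = symF st μ ν := by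
  simp only [symF, euler, sigmaQ]
  have key : ∀ a : E,
      (μ (if st.1 a = i ∨ st.2 a = i then st.2 a else st.1 a) *
        ν (if st.1 a = i ∨ st.2 a = i then st.1 a else st.2 a) +
       ν (if st.1 a = i ∨ st.2 a = i then st.2 a else st.1 a) *
        μ (if st.1 a = i ∨ st.2 a = i then st.1 a else st.2 a))
      = (μ (st.1 a) * ν (st.2 a) + ν (st.1 a) * μ (st.2 a)) := by
    intro a; split_ifs <;> ring
  calc ∑ j, μ j * ν j - ∑ a, μ _ * ν _ + (∑ j, ν j * μ j - ∑ a, ν _ * μ _)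
      = (∑ j, μ j * ν j + ∑ j, ν j * μ j) -
        ∑ a, (μ (if st.1 a = i ∨ st.2 a = i then st.2 a else st.1 a) *
        ν (if st.1 a = i ∨ st.2 a = i then st.1 a else st.2 a) +
       ν (if st.1 a = i ∨ st.2 a = i then st.2 a else st.1 a) *
        μ (if st.1 a = i ∨ st.2 a = i then st.1 a else st.2 a)) := by
        rw [Finset.sum_add_distrib]; ring
    _ = _ := by
        rw [Finset.sum_congr rfl (fun a _ => key a), Finset.sum_add_distrib]; ring

lemma refl_sigma (j i : I) (μ : I → ℚ) : refl (sigmaQ j st) i μ = refl st i μ := by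
  simp [refl, symF_sigma]

lemma applyL_sigma (j : I) (l : List I) (μ : I → ℚ) :
    applyL (sigmaQ j st) l μ = applyL st l μ := by
  induction l with
  | nil => rfl
  | cons i l ih => simp [applyL, refl_sigma, ih]

lemma sigmaQ_noloop (i : I) (hnoloop : ∀ a, st.1 a ≠ st.2 a) :
    ∀ a, (sigmaQ i st).1 a ≠ (sigmaQ i st).2 a := by
  intro a
  simp only [sigmaQ]
  split_ifs
  · exact (hnoloop a).symm
  · exact hnoloop a

lemma refl_refl (hnoloop : ∀ a, st.1 a ≠ st.2 a) (i : I) (μ : I → ℚ) :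
    refl st i (refl st i μ) = μ := by
  have h2 := symF_single_single st hnoloop i
  conv_lhs => rw [refl, refl]
  rw [symF_sub_right, symF_smul_right, h2]
  ext j; simp [Pi.single_apply]; split_ifs <;> ring

lemma symF_refl_refl (hnoloop : ∀ a, st.1 a ≠ st.2 a) (i : I) (μ ν : I → ℚ) :
    symF st (refl st i μ) (refl st i ν) = symF st μ ν := by
  have h2 := symF_single_single st hnoloop i
  have hc : symF st μ (Pi.single i 1) = symF st (Pi.single i 1) μ := symF_comm ..
  rw [refl, refl, symF_sub_left, symF_sub_right, symF_sub_right, symF_smul_left,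
    symF_smul_right, symF_smul_right, symF_smul_left, h2, hc]
  ring

lemma symF_single_src (i : I) (hsrc : ∀ a, st.2 a ≠ i) (μ : I → ℚ) :
    symF st (Pi.single i 1) μ = 2 * μ i - ∑ a, (if st.1 a = i then μ (st.2 a) else 0) := by
  have h1 : ∑ j, (Pi.single i 1 : I → ℚ) j * μ j = μ i := by
    simp [Pi.single_apply, ite_mul]
  have h2 : ∑ j, μ j * (Pi.single i 1 : I → ℚ) j = μ i := by
    simp [Pi.single_apply, mul_ite]
  have h3 : ∀ a, (Pi.single i 1 : I → ℚ) (st.1 a) * μ (st.2 a)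
      = (if st.1 a = i then μ (st.2 a) else 0) := by
    intro a; simp [Pi.single_apply, ite_mul]
  have h4 : ∀ a, μ (st.1 a) * (Pi.single i 1 : I → ℚ) (st.2 a) = 0 := by
    intro a; simp [Pi.single_apply, hsrc a]
  rw [symF, euler, euler, h1, h2,
    Finset.sum_congr rfl (fun a _ => h3 a), Finset.sum_congr rfl (fun a _ => h4 a)]
  simp; ring

lemma euler_single_right_src (i : I) (hsrc : ∀ a, st.2 a ≠ i) (ν : I → ℚ) :
    euler st ν (Pi.single i 1) = ν i := by
  have h2 : ∑ j, ν j * (Pi.single i 1 : I → ℚ) j = ν i := by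
    simp [Pi.single_apply, mul_ite]
  have h4 : ∀ a, ν (st.1 a) * (Pi.single i 1 : I → ℚ) (st.2 a) = 0 := by
    intro a; simp [Pi.single_apply, hsrc a]
  rw [euler, h2, Finset.sum_congr rfl (fun a _ => h4 a)]
  simp

lemma euler_sigma_refl (i : I) (hsrc : ∀ a, st.2 a ≠ i) (μ ν : I → ℚ) :
    euler (sigmaQ i st) μ ν = euler st (refl st i μ) (refl st i ν) := by
  set c := symF st (Pi.single i 1) μ with hc
  set d := symF st (Pi.single i 1) ν with hd
  have hcv : c = 2 * μ i - ∑ a, (if st.1 a = i then μ (st.2 a) else 0) :=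
    symF_single_src st i hsrc μ
  have hdv : d = 2 * ν i - ∑ a, (if st.1 a = i then ν (st.2 a) else 0) :=
    symF_single_src st i hsrc ν
  have h1 : ∑ j, refl st i μ j * refl st i ν j
      = ∑ j, μ j * ν j - (c * ν i + d * μ i - c * d) := by
    have e : ∀ j, refl st i μ j * refl st i ν j
        = μ j * ν j - (if j = i then c * ν j + d * μ j - c * d else 0) := by
      intro j
      simp only [refl, ← hc, ← hd, Pi.sub_apply, Pi.smul_apply, smul_eq_mul, Pi.single_apply]
      split_ifs <;> ring
    rw [Finset.sum_congr rfl (fun j _ => e j), Finset.sum_sub_distrib]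
    congr 1
    simp [Finset.sum_ite_eq']
  have h2 : ∑ a, refl st i μ (st.1 a) * refl st i ν (st.2 a)
      = ∑ a, μ (st.1 a) * ν (st.2 a) - c * ∑ a, (if st.1 a = i then ν (st.2 a) else 0) := by
    have e : ∀ a, refl st i μ (st.1 a) * refl st i ν (st.2 a)
        = μ (st.1 a) * ν (st.2 a) - c * (if st.1 a = i then ν (st.2 a) else 0) := by
      intro a
      simp only [refl, ← hc, ← hd, Pi.sub_apply, Pi.smul_apply, smul_eq_mul, Pi.single_apply,
        if_neg (hsrc a)]
      split_ifs <;> ring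
    rw [Finset.sum_congr rfl (fun a _ => e a), Finset.sum_sub_distrib, ← Finset.mul_sum]
  have e3 : ∀ a, μ ((sigmaQ i st).1 a) * ν ((sigmaQ i st).2 a)
      = μ (st.1 a) * ν (st.2 a) +
        ((if st.1 a = i then μ (st.2 a) else 0) * ν i
          - μ i * (if st.1 a = i then ν (st.2 a) else 0)) := by
    intro a
    by_cases h : st.1 a = i
    · simp [sigmaQ, h, hsrc a]; try ring
    · simp [sigmaQ, h, hsrc a]
  have h3 : ∑ a, μ ((sigmaQ i st).1 a) * ν ((sigmaQ i st).2 a)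
      = ∑ a, μ (st.1 a) * ν (st.2 a) +
        ((∑ a, if st.1 a = i then μ (st.2 a) else 0) * ν i
          - μ i * ∑ a, (if st.1 a = i then ν (st.2 a) else 0)) := by
    rw [Finset.sum_congr rfl (fun a _ => e3 a), Finset.sum_add_distrib,
      Finset.sum_sub_distrib, ← Finset.sum_mul, ← Finset.mul_sum]
  rw [euler, euler, h1, h2, h3, hcv, hdv]; ring

lemma euler_eq_sum_right (μ ν : I → ℚ) :
    euler st μ ν = ∑ k, ν k * euler st μ (Pi.single k 1) := by
  have e : ∀ k, ν k * euler st μ (Pi.single k 1)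
      = ν k * μ k - ∑ a, (if st.2 a = k then μ (st.1 a) * ν k else 0) := by
    intro k
    have h1 : ∑ j, μ j * (Pi.single k 1 : I → ℚ) j = μ k := by
      simp [Pi.single_apply, mul_ite]
    rw [euler, h1, mul_sub, Finset.mul_sum]
    congr 1
    exact Finset.sum_congr rfl fun a _ => by
      simp only [Pi.single_apply, mul_ite, ite_mul, mul_one, mul_zero, one_mul, zero_mul]
      all_goals split_ifs <;> ring
  rw [Finset.sum_congr rfl (fun k _ => e k), Finset.sum_sub_distrib, Finset.sum_comm, euler]
  congr 1
  · exact Finset.sum_congr rfl fun j _ => by ring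
  · exact Finset.sum_congr rfl fun a _ => by
      rw [Finset.sum_ite_eq]; simp [mul_comm]

lemma euler_eq_sum_left (μ ν : I → ℚ) :
    euler st ν μ = ∑ k, ν k * euler st (Pi.single k 1) μ := by
  have e : ∀ k, ν k * euler st (Pi.single k 1) μ
      = ν k * μ k - ∑ a, (if st.1 a = k then ν k * μ (st.2 a) else 0) := by
    intro k
    have h1 : ∑ j, (Pi.single k 1 : I → ℚ) j * μ j = μ k := by
      simp [Pi.single_apply, ite_mul]
    rw [euler, h1, mul_sub, Finset.mul_sum]
    congr 1
    exact Finset.sum_congr rfl fun a _ => by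
      simp only [Pi.single_apply, mul_ite, ite_mul, mul_one, mul_zero, one_mul, zero_mul]
      all_goals split_ifs <;> ring
  rw [Finset.sum_congr rfl (fun k _ => e k), Finset.sum_sub_distrib, Finset.sum_comm, euler]
  congr 1
  exact Finset.sum_congr rfl fun a _ => by
    rw [Finset.sum_ite_eq]; simp [mul_comm]

lemma symF_eq_sum_right (μ ν : I → ℚ) :
    symF st μ ν = ∑ k, ν k * symF st μ (Pi.single k 1) := by
  rw [symF, euler_eq_sum_right st μ ν, euler_eq_sum_left st μ ν, ← Finset.sum_add_distrib]
  exact Finset.sum_congr rfl fun k _ => by rw [symF]; ring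

lemma symF_omega (ω : I → I → ℚ)
    (hω : ∀ i j, symF st (ω i) (Pi.single j 1) = if i = j then 1 else 0)
    (j : I) (ν : I → ℚ) : symF st (ω j) ν = ν j := by
  rw [symF_eq_sum_right]
  simp [hω, mul_ite, Finset.sum_ite_eq]

end Aux

lemma main_induction (l : List I) :
    ∀ (st : (E → I) × (E → I)), (∀ a, st.1 a ≠ st.2 a) →
    ∀ (ω : I → I → ℚ), (∀ i j, symF st (ω i) (Pi.single j 1) = if i = j then 1 else 0) →
    ∀ (hne : l ≠ []), Adapted l st → ∀ ν : I → ℚ,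
    euler st (applyL st l (-(Pi.single (l.getLast hne) 1 : I → ℚ))) ν
      = symF st (applyL st l (-(ω (l.getLast hne)))) ν := by
  induction l with
  | nil => intro _ _ _ _ hne; exact absurd rfl hne
  | cons i l' ih =>
    intro st hnoloop ω hω hne hadapted ν
    obtain ⟨hsrc, had'⟩ := hadapted
    by_cases h : l' = []
    · subst h
      have hlast : ([i] : List I).getLast hne = i := rfl
      rw [hlast]
      show euler st (refl st i (applyL st [] _)) ν = symF st (refl st i (applyL st [] _)) ν
      show euler st (refl st i (-(Pi.single i 1 : I → ℚ))) ν
        = symF st (refl st i (-(ω i))) ν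
      have hr1 : refl st i (-(Pi.single i 1 : I → ℚ)) = Pi.single i 1 := by
        rw [refl, symF_neg_right, symF_single_single st hnoloop i]
        ext j; simp; ring
      have hr2 : refl st i (-(ω i)) = (Pi.single i 1 : I → ℚ) - ω i := by
        have hω1 : symF st (Pi.single i 1) (ω i) = 1 := by
          rw [symF_comm, hω]; simp
        rw [refl, symF_neg_right, hω1]
        ext j; simp; ring
      rw [hr1, hr2, symF_sub_left, symF_omega st ω hω i ν]
      have : symF st (Pi.single i 1) ν
          = euler st (Pi.single i 1) ν + ν i := by
        rw [symF, euler_single_right_src st i hsrc ν]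
      rw [this]; ring
    · set st' := sigmaQ i st with hst'
      have hnl' : ∀ a, st'.1 a ≠ st'.2 a := sigmaQ_noloop st i hnoloop
      have hω' : ∀ i' j, symF st' (ω i') (Pi.single j 1) = if i' = j then 1 else 0 := by
        intro i' j; rw [hst', symF_sigma]; exact hω i' j
      have hlast : (i :: l').getLast hne = l'.getLast h := List.getLast_cons h
      have IH := ih st' hnl' ω hω' h had'
      show euler st (refl st i (applyL st l' (-(Pi.single ((i :: l').getLast hne) 1 : I → ℚ)))) ν
        = symF st (refl st i (applyL st l' (-(ω ((i :: l').getLast hne))))) ν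
      rw [hlast]
      set M := applyL st l' (-(Pi.single (l'.getLast h) 1 : I → ℚ)) with hM
      set Φ := applyL st l' (-(ω (l'.getLast h))) with hΦ
      have IH' : ∀ ν' : I → ℚ, euler st' M ν' = symF st Φ ν' := by
        intro ν'
        have := IH ν'
        rwa [applyL_sigma, applyL_sigma, symF_sigma, ← hM, ← hΦ] at this
      calc euler st (refl st i M) ν
          = euler st (refl st i M) (refl st i (refl st i ν)) := by
            rw [refl_refl st hnoloop]
        _ = euler st' M (refl st i ν) := (euler_sigma_refl st i hsrc M (refl st i ν)).symm
        _ = symF st Φ (refl st i ν) := IH' (refl st i ν)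
        _ = symF st (refl st i Φ) (refl st i (refl st i ν)) := by
            rw [symF_refl_refl st hnoloop]
        _ = symF st (refl st i Φ) ν := by rw [refl_refl st hnoloop]

/-- Let `Q` be an orientation of a simply-laced Dynkin diagram
(no loops, symmetrized Euler form positive definite), let `(i_1,…,i_n)` be a
nonempty sequence adapted to `Q*`, and suppose `s_{i_1} ⋯ s_{i_n}` is a reduced
expression of `w ∈ W`. Then, as linear forms on the root lattice,
`⟨−w α_{i_n}, ·⟩_Q = ⟨−w ω_{i_n}, ·⟩`, where `ω_{i_n}` is the fundamental
weight characterized by `⟨ω_i, α_j⟩ = δ_{ij}`. -/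
theorem stmt2 (st : (E → I) × (E → I))
    (hnoloop : ∀ a, st.1 a ≠ st.2 a)
    (hposdef : ∀ μ : I → ℚ, μ ≠ 0 → 0 < symF st μ μ)
    (ω : I → I → ℚ)
    (hω : ∀ i j, symF st (ω i) (Pi.single j 1) = if i = j then 1 else 0)
    (l : List I) (hne : l ≠ [])
    (hadapted : Adapted l st)
    (hreduced : IsReduced st l)
    (ν : I → ℚ) :
    euler st (applyL st l (-(Pi.single (l.getLast hne) 1 : I → ℚ))) ν
      = symF st (applyL st l (-(ω (l.getLast hne)))) ν :=
  main_induction l st hnoloop ω hω hne hadapted ν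

end Stmt2
end

section
/- Let Q be a quiver of type A_3 arising from a Dynkin diagram, let i and j be adjacent vertices, and let M be any finite-dimensional Π(Q)-module. With the local data at i,j written R ⇄^{k,l} V ⇄^{f,g} W ⇄^{m,n} S satisfying kl + ε(c*)gf = 0 and nm + ε(c)fg = 0, one has dim Hom(S_i,M) + dim Hom(S_j,M) ≥ dim Hom(T_i,M), with equality if and only if g(ker m) ∩ ker l = ker f ∩ ker l, where Hom(S_i,M) ≅ ker f ∩ ker l, Hom(S_j,M) ≅ ker g ∩ ker m, and Hom(T_i,M) ≅ ker m ∩ g⁻¹(ker f ∩ ker l). -/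
open LinearMap

private theorem finrank_restrict_aux {K : Type} [Field K] {V W : Type}
    [AddCommGroup V] [AddCommGroup W]
    [Module K V] [Module K W] [FiniteDimensional K V] [FiniteDimensional K W]
    (g : W →ₗ[K] V) (p : Submodule K W) :
    Module.finrank K p =
      Module.finrank K (Submodule.map g p) + Module.finrank K (ker g ⊓ p : Submodule K W) := by
  have h := (g.domRestrict p).finrank_range_add_finrank_ker
  rw [range_domRestrict, ker_domRestrict] at h
  have e2 : Submodule.comap p.subtype (ker g) = Submodule.comap p.subtype (ker g ⊓ p) := by
    ext ⟨x, hx⟩; simp [hx]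
  rw [e2, LinearEquiv.finrank_eq
    (Submodule.comapSubtypeEquivOfLe (inf_le_right : ker g ⊓ p ≤ p))] at h
  exact h.symm

/-- Local linear-algebra form of the base case of the tropical
Plücker relations. Given the local data `R ⇄^{k,l} V ⇄^{f,g} W ⇄^{m,n} S` of a
`Π(Q)`-module around two adjacent vertices `i, j` (with `e = ε(c*)`, so
`−e = ε(c)`), satisfying the preprojective relations `kl + ε(c*) gf = 0` and
`nm + ε(c) fg = 0`, one has
`dim Hom(S_i,M) + dim Hom(S_j,M) ≥ dim Hom(T_i,M)`, with equality if and only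
if `g(ker m) ∩ ker l = ker f ∩ ker l`; here `Hom(S_i,M) ≅ ker f ∩ ker l`,
`Hom(S_j,M) ≅ ker g ∩ ker m`, and `Hom(T_i,M) ≅ ker m ∩ g⁻¹(ker f ∩ ker l)`. -/
theorem stmt19 {K : Type} [Field K]
    {R V W S : Type}
    [AddCommGroup R] [AddCommGroup V] [AddCommGroup W] [AddCommGroup S]
    [Module K R] [Module K V] [Module K W] [Module K S]
    [FiniteDimensional K R] [FiniteDimensional K V]
    [FiniteDimensional K W] [FiniteDimensional K S]
    (k : R →ₗ[K] V) (l : V →ₗ[K] R)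
    (f : V →ₗ[K] W) (g : W →ₗ[K] V)
    (m : W →ₗ[K] S) (n : S →ₗ[K] W)
    (e : K) (he : e = 1 ∨ e = -1)
    (rel1 : k ∘ₗ l + e • (g ∘ₗ f) = 0)
    (rel2 : n ∘ₗ m + (-e) • (f ∘ₗ g) = 0) :
    Module.finrank K (ker f ⊓ ker l : Submodule K V)
        + Module.finrank K (ker g ⊓ ker m : Submodule K W)
      ≥ Module.finrank K (ker m ⊓ Submodule.comap g (ker f ⊓ ker l) : Submodule K W)
    ∧ (Module.finrank K (ker f ⊓ ker l : Submodule K V)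
          + Module.finrank K (ker g ⊓ ker m : Submodule K W)
        = Module.finrank K (ker m ⊓ Submodule.comap g (ker f ⊓ ker l) : Submodule K W)
      ↔ Submodule.map g (ker m) ⊓ ker l = ker f ⊓ ker l) := by
  have heNe : e ≠ 0 := by rcases he with h | h <;> simp [h]
  -- from rel2 : g maps ker m into ker f
  have hker : ∀ x ∈ ker m, g x ∈ ker f := by
    intro x hx
    have := congrArg (fun φ => φ x) rel2
    simp only [LinearMap.add_apply, coe_comp, Function.comp_apply, LinearMap.smul_apply, LinearMap.zero_apply] at this
    rw [show m x = 0 from hx, map_zero, zero_add, neg_smul] at this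
    have h2 : e • f (g x) = 0 := neg_eq_zero.mp (by simpa using this)
    exact mem_ker.mpr ((smul_eq_zero.mp h2).resolve_left heNe)
  set p : Submodule K W := ker m ⊓ Submodule.comap g (ker f ⊓ ker l) with hp
  have hmap : Submodule.map g p = Submodule.map g (ker m) ⊓ ker l := by
    apply le_antisymm
    · rintro x ⟨w, ⟨hwm, hwq⟩, rfl⟩
      exact ⟨⟨w, hwm, rfl⟩, hwq.2⟩
    · rintro x ⟨⟨w, hwm, rfl⟩, hxl⟩
      exact ⟨w, ⟨hwm, ⟨hker w hwm, hxl⟩⟩, rfl⟩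
  have hkk : ker g ⊓ p = ker g ⊓ ker m := by
    apply le_antisymm
    · exact inf_le_inf_left _ (hp ▸ inf_le_left)
    · rintro x ⟨hxg, hxm⟩
      refine ⟨hxg, hxm, ?_⟩
      have : g x = 0 := hxg
      simp [Submodule.mem_comap, this]
  have hrank := finrank_restrict_aux g p
  rw [hkk] at hrank
  have hle : Submodule.map g p ≤ ker f ⊓ ker l := by
    rw [hmap]
    rintro x ⟨⟨w, hwm, rfl⟩, hxl⟩
    exact ⟨hker w hwm, hxl⟩
  have hfle : Module.finrank K (Submodule.map g p) ≤
      Module.finrank K (ker f ⊓ ker l : Submodule K V) :=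
    Submodule.finrank_mono hle
  constructor
  · rw [hrank]; omega
  · constructor
    · intro heq
      rw [hrank] at heq
      have hfr : Module.finrank K (ker f ⊓ ker l : Submodule K V)
          = Module.finrank K (Submodule.map g p) := by omega
      have := Submodule.eq_of_le_of_finrank_le hle hfr.le
      rw [hmap] at this; exact this
    · intro hcond
      rw [hrank, ← hmap.trans hcond]
end
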